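/- arXiv:2005.02461 — 2 statements merged into one kernel-verified Lean document; each statement's English description precedes it below -/
import Mathlib

section
/- Let n be a positive integer and let D be an additive subgroup of the functions Fin n → ZMod 6 that contains the constant function 3, is closed under coordinatewise application of s, and has all coordinate projections D → ZMod 6 surjective. Let I ⊆ D be a subset that is closed under subtraction and contains 0 (an additive subgroup of D), such that for all d, d' ∈ D, if d − d' ∈ I then (s∘d) − (s∘d') ∈ I (here s∘d denotes coordinatewise application of s). Suppose I contains every element of D of additive order dividing 3, i.e., every d ∈ D with 3·d = 0 belongs to I. Then the constant function 3 belongs to I. -/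
/-!
The values of `s` lie in the `2`-torsion `{0, 3}` of `ZMod 6`. Since `s (3 x) = 0` and `x - 3 x`
is `3`-torsion, the ideal property puts `s ∘ d` into `I` for every `d ∈ D`. On `{0, 3}`
multiplication is "and" and `a + b + a b` is "or", and the identity
`s a * s b = s (a + b) + s (a - b)` makes the additive span of `{s ∘ d | d ∈ D}` closed under
multiplication. As `D` is subdirect, each coordinate is `3` in some `s ∘ d` (take `d i = 1`), and
the "or" of finitely many of these is the constant `3`.
-/

/-- The unary operation `s` of the algebra `𝔸 = ⟨ZMod 6; +, s, 3⟩`: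
`s 0 = s 3 = 0` and `s x = 3` for `x ∈ {1, 2, 4, 5}`. -/
def sOp : ZMod 6 → ZMod 6 := fun x => if x = 0 ∨ x = 3 then 0 else 3

theorem AddSubgroup.mul_mem_closure_of_mul_mem {R : Type*} [NonUnitalNonAssocRing R] {s : Set R}
    (hs : ∀ x ∈ s, ∀ y ∈ s, x * y ∈ closure s) {x y : R}
    (hx : x ∈ closure s) (hy : y ∈ closure s) : x * y ∈ closure s := by
  induction hx, hy using closure_induction₂ with
  | mem x y hx hy => exact hs x hx y hy
  | zero_left => simp
  | zero_right => simp
  | add_left _ _ _ _ _ _ h₁ h₂ => simpa [add_mul] using add_mem h₁ h₂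
  | add_right _ _ _ _ _ _ h₁ h₂ => simpa [mul_add] using add_mem h₁ h₂
  | neg_left _ _ _ _ h => simpa [neg_mul] using neg_mem h
  | neg_right _ _ _ _ h => simpa [mul_neg] using neg_mem h

theorem sOp_mul_sOp (a b : ZMod 6) : sOp a * sOp b = sOp (a + b) + sOp (a - b) := by
  decide +revert

theorem sOp_three_nsmul (a : ZMod 6) : sOp (3 • a) = 0 := by
  decide +revert

theorem two_nsmul_sOp (a : ZMod 6) : 2 • sOp a = 0 := by
  decide +revert

theorem sOp_one : sOp 1 = 3 := by
  decide

theorem ZMod.add_add_mul_eq_three {a b : ZMod 6} (ha : 2 • a = 0) (hb : 2 • b = 0)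
    (h : a = 3 ∨ b = 3) : a + b + a * b = 3 := by
  decide +revert

section PiZModSix

variable {ι : Type*} {S : AddSubgroup (ι → ZMod 6)}

theorem exists_mem_forall_eq_three (htors : S ≤ AddSubgroup.torsionBy (ι → ZMod 6) 2)
    (hmul : ∀ x ∈ S, ∀ y ∈ S, x * y ∈ S) (hcover : ∀ i, ∃ x ∈ S, x i = 3) (T : Finset ι) :
    ∃ x ∈ S, ∀ i ∈ T, x i = 3 := by
  classical
  have htors_apply : ∀ x ∈ S, ∀ i, 2 • x i = 0 := fun x hx i =>
    congr_fun (AddSubgroup.torsionBy.nsmul_iff.1 (htors hx)) i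
  induction T using Finset.induction_on with
  | empty => exact ⟨0, S.zero_mem, by simp⟩
  | insert j T _ ih =>
    obtain ⟨x, hxS, hxT⟩ := ih
    obtain ⟨y, hyS, hyj⟩ := hcover j
    refine ⟨x + y + x * y, add_mem (add_mem hxS hyS) (hmul x hxS y hyS), ?_⟩
    intro i hi
    refine ZMod.add_add_mul_eq_three (htors_apply x hxS i) (htors_apply y hyS i) ?_
    rcases Finset.mem_insert.1 hi with rfl | hiT
    · exact .inr hyj
    · exact .inl (hxT i hiT)

theorem const_three_mem [Fintype ι] (htors : S ≤ AddSubgroup.torsionBy (ι → ZMod 6) 2)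
    (hmul : ∀ x ∈ S, ∀ y ∈ S, x * y ∈ S) (hcover : ∀ i, ∃ x ∈ S, x i = 3) :
    (fun _ => (3 : ZMod 6)) ∈ S := by
  obtain ⟨x, hxS, hx⟩ := exists_mem_forall_eq_three htors hmul hcover Finset.univ
  rwa [show x = fun _ => 3 from funext fun i => hx i (Finset.mem_univ i)] at hxS

end PiZModSix

section SOpSpan

variable {ι : Type*} {D : AddSubgroup (ι → ZMod 6)}

def sOpSpan (D : AddSubgroup (ι → ZMod 6)) : AddSubgroup (ι → ZMod 6) :=
  AddSubgroup.closure ((fun (d : ι → ZMod 6) i => sOp (d i)) '' (D : Set (ι → ZMod 6)))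

theorem sOpSpan_le_torsionBy_two : sOpSpan D ≤ AddSubgroup.torsionBy (ι → ZMod 6) 2 := by
  refine (AddSubgroup.closure_le _).2 ?_
  rintro _ ⟨d, -, rfl⟩
  exact AddSubgroup.torsionBy.nsmul_iff.2 (funext fun i => two_nsmul_sOp (d i))

theorem mul_mem_sOpSpan {x y : ι → ZMod 6} (hx : x ∈ sOpSpan D) (hy : y ∈ sOpSpan D) :
    x * y ∈ sOpSpan D := by
  refine AddSubgroup.mul_mem_closure_of_mul_mem ?_ hx hy
  rintro _ ⟨v, hv, rfl⟩ _ ⟨w, hw, rfl⟩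
  have hvw : (fun i => sOp (v i)) * (fun i => sOp (w i)) =
      (fun i => sOp ((v + w) i)) + (fun i => sOp ((v - w) i)) :=
    funext fun i => sOp_mul_sOp (v i) (w i)
  rw [hvw]
  exact add_mem (AddSubgroup.subset_closure ⟨v + w, add_mem hv hw, rfl⟩)
    (AddSubgroup.subset_closure ⟨v - w, sub_mem hv hw, rfl⟩)

theorem const_three_mem_sOpSpan [Fintype ι] (hsubdir : ∀ i, ∃ d ∈ D, d i = 1) :
    (fun _ => (3 : ZMod 6)) ∈ sOpSpan D := by
  refine const_three_mem sOpSpan_le_torsionBy_two (fun _ hx _ hy => mul_mem_sOpSpan hx hy) ?_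
  intro i
  obtain ⟨d, hd, hdi⟩ := hsubdir i
  exact ⟨_, AddSubgroup.subset_closure ⟨d, hd, rfl⟩, by simp [hdi, sOp_one]⟩

theorem sOp_comp_mem_of_ideal {I : Set (ι → ZMod 6)}
    (hideal : ∀ d ∈ D, ∀ d' ∈ D, d - d' ∈ I →
      (fun i => sOp (d i)) - (fun i => sOp (d' i)) ∈ I)
    (hV3 : ∀ d ∈ D, (3 : ℕ) • d = 0 → d ∈ I) {d : ι → ZMod 6} (hd : d ∈ D) :
    (fun i => sOp (d i)) ∈ I := by
  have hd3 : (3 : ℕ) • d ∈ D := nsmul_mem hd 3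
  have htors : (3 : ℕ) • (d - (3 : ℕ) • d) = 0 := by
    funext i
    simp only [Pi.smul_apply, Pi.sub_apply, Pi.zero_apply]
    generalize d i = a
    decide +revert
  have h := hideal d hd _ hd3 (hV3 _ (sub_mem hd hd3) htors)
  have hzero : (fun i => sOp (((3 : ℕ) • d) i)) = 0 :=
    funext fun i => sOp_three_nsmul (d i)
  rwa [hzero, sub_zero] at h

end SOpSpan

theorem const_three_mem_ideal_of_sylow_three_subset_general
    (n : ℕ) (D : AddSubgroup (Fin n → ZMod 6))
    (hsubdir : ∀ (i : Fin n) (a : ZMod 6), ∃ d ∈ D, d i = a)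
    (I : Set (Fin n → ZMod 6))
    (h0 : (0 : Fin n → ZMod 6) ∈ I)
    (hsubtr : ∀ a ∈ I, ∀ b ∈ I, a - b ∈ I)
    (hideal : ∀ d ∈ D, ∀ d' ∈ D, d - d' ∈ I →
      (fun i => sOp (d i)) - (fun i => sOp (d' i)) ∈ I)
    (hV3 : ∀ d ∈ D, (3 : ℕ) • d = 0 → d ∈ I) :
    (fun _ => (3 : ZMod 6)) ∈ I := by
  let J : AddSubgroup (Fin n → ZMod 6) :=
    AddSubgroup.ofSub I ⟨0, h0⟩ fun a ha b hb => by
      simpa [sub_eq_add_neg] using hsubtr a ha b hb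
  have hspan : sOpSpan D ≤ J := (AddSubgroup.closure_le _).2 <| by
    rintro _ ⟨d, hd, rfl⟩
    exact sOp_comp_mem_of_ideal hideal hV3 hd
  exact hspan (const_three_mem_sOpSpan fun i => hsubdir i 1)

/-- If `D` is a finite subdirect power of the algebra `𝔸 = ⟨ZMod 6; +, s, 3⟩` and `I` is an
ideal of `D` containing the Sylow 3-subgroup `V₃(D) = {d ∈ D | 3 • d = 0}`, then the
constant `c = 3` of `D` belongs to `I`. -/
theorem const_three_mem_ideal_of_sylow_three_subset
    (n : ℕ) (hn : 0 < n) (D : AddSubgroup (Fin n → ZMod 6))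
    (hc : (fun _ => (3 : ZMod 6)) ∈ D)
    (hs : ∀ d ∈ D, (fun i => sOp (d i)) ∈ D)
    (hsubdir : ∀ (i : Fin n) (a : ZMod 6), ∃ d ∈ D, d i = a)
    (I : Set (Fin n → ZMod 6)) (hID : I ⊆ (D : Set (Fin n → ZMod 6)))
    (h0 : (0 : Fin n → ZMod 6) ∈ I)
    (hsubtr : ∀ a ∈ I, ∀ b ∈ I, a - b ∈ I)
    (hideal : ∀ d ∈ D, ∀ d' ∈ D, d - d' ∈ I →
      (fun i => sOp (d i)) - (fun i => sOp (d' i)) ∈ I)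
    (hV3 : ∀ d ∈ D, (3 : ℕ) • d = 0 → d ∈ I) :
    (fun _ => (3 : ZMod 6)) ∈ I :=
  const_three_mem_ideal_of_sylow_three_subset_general n D hsubdir I h0 hsubtr hideal hV3
end

section
/- Let n be a positive integer and let D be an additive subgroup of the functions Fin n → ZMod 6 such that every coordinate projection D → ZMod 6 is surjective. Let V = {d ∈ D | 3·d = 0}, and let P be a finite set of elements of V such that 0 ∉ P and for every nonzero d ∈ V exactly one of d, −d belongs to P. Then the coordinatewise sum Σ_{d ∈ P} (s∘d) equals the constant function 3; that is, for every index i, Σ_{d ∈ P} s(d(i)) = 3 in ZMod 6. -/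
/-!
On `V` the value `s (v i)` is `3` exactly when `v i ≠ 0`, so the sum is `3` times the number
`N` of `p ∈ P` with `p i ≠ 0`, and it suffices that `N` is odd. As `P` picks one element from
each pair `{v, -v}` of nonzero elements of `V`, the `v ∈ V` with `v i ≠ 0` number `2N`. The
values `v i` lie in `{0, 2, 4}`, and subdirectness gives `w ∈ V` with `w i = 2`; translation by
`w` shows that the three fibres of `v ↦ v i` have equal size, so `N` is the size of the kernel
`{v ∈ V | v i = 0}`. The nonzero elements of that kernel also come in pairs `{v, -v}`, so its
size is odd.
-/

open Finset AddSubgroup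

section Counting

variable {G : Type*} [AddGroup G] [Fintype G] (H : AddSubgroup G) [DecidablePred (· ∈ H)]

theorem card_fiber_add_eq {M : Type*} [AddGroup M] [DecidableEq M] (f : G →+ M) {w : G}
    (hw : w ∈ H) (c : M) :
    #{v | v ∈ H ∧ f v = c + f w} = #{v | v ∈ H ∧ f v = c} := by
  refine card_nbij' (· - w) (· + w) ?_ ?_ (fun v _ => sub_add_cancel v w)
    (fun v _ => add_sub_cancel_right v w)
  · intro v hv
    simp only [coe_filter, mem_univ, true_and, Set.mem_ofPred_eq] at hv ⊢
    exact ⟨H.sub_mem hv.1 hw, by rw [map_sub, hv.2, add_sub_cancel_right]⟩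
  · intro v hv
    simp only [coe_filter, mem_univ, true_and, Set.mem_ofPred_eq] at hv ⊢
    exact ⟨H.add_mem hv.1 hw, by rw [map_add, hv.2]⟩

variable [DecidableEq G] {P : Finset G}

theorem card_filter_mem_eq_two_mul_card_filter (hPH : ∀ p ∈ P, p ∈ H)
    (hrep : ∀ v ∈ H, v ≠ 0 → (v ∈ P ↔ -v ∉ P)) {q : G → Prop} [DecidablePred q]
    (hq0 : ¬q 0) (hq : ∀ v, q (-v) ↔ q v) :
    #{v | v ∈ H ∧ q v} = 2 * #{p ∈ P | q p} := by
  have hdisj : Disjoint {p ∈ P | q p} ({p ∈ P | q p}.image Neg.neg) := by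
    refine disjoint_left.2 fun v hv hv' => ?_
    obtain ⟨p, hp, rfl⟩ := mem_image.1 hv'
    rw [mem_filter] at hv hp
    have hv0 : -p ≠ 0 := fun h => hq0 (h ▸ hv.2)
    exact (hrep (-p) (hPH _ hv.1) hv0).1 hv.1 (by rw [neg_neg]; exact hp.1)
  have hunion : ({v | v ∈ H ∧ q v} : Finset G) = {p ∈ P | q p} ∪ {p ∈ P | q p}.image Neg.neg := by
    ext v
    simp only [mem_filter, mem_univ, true_and, mem_union, mem_image]
    constructor
    · rintro ⟨hvH, hqv⟩
      by_cases hvP : v ∈ P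
      · exact Or.inl ⟨hvP, hqv⟩
      · have hnvP := (iff_not_comm.1 (hrep v hvH fun h => hq0 (h ▸ hqv))).2 hvP
        exact Or.inr ⟨-v, ⟨hnvP, (hq v).2 hqv⟩, neg_neg v⟩
    · rintro (⟨hvP, hqv⟩ | ⟨p, ⟨hpP, hqp⟩, rfl⟩)
      · exact ⟨hPH v hvP, hqv⟩
      · exact ⟨H.neg_mem (hPH p hpP), (hq p).2 hqp⟩
  rw [hunion, card_union_of_disjoint hdisj, card_image_of_injective _ neg_injective, two_mul]

theorem odd_card_filter_mem (hPH : ∀ p ∈ P, p ∈ H)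
    (hrep : ∀ v ∈ H, v ≠ 0 → (v ∈ P ↔ -v ∉ P)) {q : G → Prop} [DecidablePred q]
    (hq0 : q 0) (hq : ∀ v, q (-v) ↔ q v) :
    Odd #{v | v ∈ H ∧ q v} := by
  have hmem : (0 : G) ∈ ({v | v ∈ H ∧ q v} : Finset G) := by simp [H.zero_mem, hq0]
  have herase : ({v | v ∈ H ∧ q v} : Finset G).erase 0 =
      ({v | v ∈ H ∧ (q v ∧ v ≠ 0)} : Finset G) := by
    ext v
    simp only [mem_erase, mem_filter, mem_univ, true_and]
    tauto
  refine ⟨#{p ∈ P | q p ∧ p ≠ 0}, ?_⟩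
  rw [← card_erase_add_one hmem, herase,
    card_filter_mem_eq_two_mul_card_filter H hPH hrep (by simp) (by simp [hq])]

end Counting

theorem ZMod.eq_two_or_eq_four_of_three_nsmul_eq_zero {x : ZMod 6} (hx : (3 : ℕ) • x = 0)
    (h0 : x ≠ 0) : x = 2 ∨ x = 4 := by
  revert x
  decide

theorem sOp_eq_ite_of_three_nsmul_eq_zero {x : ZMod 6} (hx : (3 : ℕ) • x = 0) :
    sOp x = if x ≠ 0 then 3 else 0 := by
  revert x
  decide

theorem ZMod.odd_nsmul_three_eq_three {k : ℕ} (hk : Odd k) : k • (3 : ZMod 6) = 3 := by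
  obtain ⟨m, rfl⟩ := hk
  rw [succ_nsmul, mul_nsmul, show 2 • (3 : ZMod 6) = 0 by decide, nsmul_zero, zero_add]

theorem sum_sOp_eq_card_filter_ne_zero_nsmul_three {α : Type*} (s : Finset α) (g : α → ZMod 6)
    (hg : ∀ a ∈ s, (3 : ℕ) • g a = 0) :
    ∑ a ∈ s, sOp (g a) = #{a ∈ s | g a ≠ 0} • (3 : ZMod 6) := by
  rw [sum_congr rfl fun a ha => sOp_eq_ite_of_three_nsmul_eq_zero (hg a ha), ← sum_filter,
    sum_const]

theorem card_filter_apply_ne_zero_eq_two_mul {ι : Type*} [Fintype ι] [DecidableEq ι]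
    (V : AddSubgroup (ι → ZMod 6)) [DecidablePred (· ∈ V)] (hV : ∀ v ∈ V, (3 : ℕ) • v = 0)
    {i : ι} {w : ι → ZMod 6} (hwV : w ∈ V) (hwi : w i = 2) :
    #{v | v ∈ V ∧ v i ≠ 0} = 2 * #{v | v ∈ V ∧ v i = 0} := by
  let f := Pi.evalAddMonoidHom (fun _ => ZMod 6) i
  have hshift (c : ZMod 6) : #{v | v ∈ V ∧ v i = c + 2} = #{v | v ∈ V ∧ v i = c} := by
    simpa [f, hwi] using card_fiber_add_eq V f hwV c
  have hvals : Set.MapsTo (fun v : ι → ZMod 6 => v i) ↑({v | v ∈ V ∧ v i ≠ 0} : Finset _)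
      ↑({2, 4} : Finset (ZMod 6)) := by
    intro v hv
    simp only [coe_filter, mem_univ, true_and, Set.mem_ofPred_eq, coe_insert, coe_singleton,
      Set.mem_insert_iff, Set.mem_singleton_iff] at hv ⊢
    exact ZMod.eq_two_or_eq_four_of_three_nsmul_eq_zero
      (by simpa using congrFun (hV v hv.1) i) hv.2
  have hfiber (c : ZMod 6) (hc : c ≠ 0) :
      ({v | (v ∈ V ∧ v i ≠ 0) ∧ v i = c} : Finset (ι → ZMod 6)) =
        ({v | v ∈ V ∧ v i = c} : Finset _) :=
    filter_congr fun v _ => ⟨fun h => ⟨h.1.1, h.2⟩, fun h => ⟨⟨h.1, h.2 ▸ hc⟩, h.2⟩⟩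
  have h2 : #{v | v ∈ V ∧ v i = 2} = #{v | v ∈ V ∧ v i = 0} := by simpa using hshift 0
  have h4 : #{v | v ∈ V ∧ v i = 4} = #{v | v ∈ V ∧ v i = 2} := hshift 2
  rw [card_eq_sum_card_fiberwise hvals, sum_pair (by decide), filter_filter, filter_filter,
    hfiber 2 (by decide), hfiber 4 (by decide), h4, h2, two_mul]

theorem sum_s_over_orbit_representatives_eq_const_three_general
    (n : ℕ) (D : AddSubgroup (Fin n → ZMod 6))
    (hsubdir : ∀ (i : Fin n) (a : ZMod 6), ∃ d ∈ D, d i = a)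
    (P : Finset (Fin n → ZMod 6))
    (hPV : ∀ p ∈ P, p ∈ D ∧ (3 : ℕ) • p = 0)
    (hrep : ∀ d ∈ D, (3 : ℕ) • d = 0 → d ≠ 0 → Xor' (d ∈ P) (-d ∈ P)) :
    ∀ i : Fin n, ∑ p ∈ P, sOp (p i) = (3 : ZMod 6) := by
  classical
  intro i
  set V := D ⊓ torsionBy (Fin n → ZMod 6) 3
  have hmemV (v) : v ∈ V ↔ v ∈ D ∧ (3 : ℕ) • v = 0 := by
    rw [AddSubgroup.mem_inf, ← torsionBy.nsmul_iff]; rfl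
  have hPV' (p) (hp : p ∈ P) : p ∈ V := (hmemV p).2 (hPV p hp)
  have hrep' (v) (hv : v ∈ V) (hv0 : v ≠ 0) : v ∈ P ↔ -v ∉ P :=
    xor_iff_iff_not.1 (hrep v ((hmemV v).1 hv).1 ((hmemV v).1 hv).2 hv0)
  obtain ⟨d, hdD, hdi⟩ := hsubdir i 1
  have hw : 2 • d ∈ V := (hmemV _).2 ⟨D.nsmul_mem hdD 2, by
    rw [smul_smul]; ext j; simp [show ∀ x : ZMod 6, (6 : ℕ) • x = 0 by decide]⟩
  have hcard := card_filter_apply_ne_zero_eq_two_mul V (fun v hv => ((hmemV v).1 hv).2) hw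
    (i := i) (by rw [Pi.smul_apply, hdi]; decide)
  have hne := card_filter_mem_eq_two_mul_card_filter V hPV' hrep' (q := fun v => v i ≠ 0)
    (by simp) (by simp)
  have hodd := odd_card_filter_mem V hPV' hrep' (q := fun v => v i = 0) rfl (by simp)
  have hcount : #{p ∈ P | p i ≠ 0} = #{v | v ∈ V ∧ v i = 0} := by omega
  rw [sum_sOp_eq_card_filter_ne_zero_nsmul_three P (· i)
      fun p hp => by simpa using congrFun (hPV p hp).2 i, hcount,
    ZMod.odd_nsmul_three_eq_three hodd]

/-- Let `D ≤ (ZMod 6)^n` be subdirect, `V = {d ∈ D | 3 • d = 0}` its Sylow 3-subgroup, and `P`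
a set of representatives of the orbits `{d, -d}` of nonzero elements of `V` under negation.
Then `∑_{d ∈ P} (s ∘ d)` is the constant function `3`. -/
theorem sum_s_over_orbit_representatives_eq_const_three
    (n : ℕ) (hn : 0 < n) (D : AddSubgroup (Fin n → ZMod 6))
    (hsubdir : ∀ (i : Fin n) (a : ZMod 6), ∃ d ∈ D, d i = a)
    (P : Finset (Fin n → ZMod 6))
    (hPV : ∀ p ∈ P, p ∈ D ∧ (3 : ℕ) • p = 0)
    (h0P : (0 : Fin n → ZMod 6) ∉ P)
    (hrep : ∀ d ∈ D, (3 : ℕ) • d = 0 → d ≠ 0 → Xor' (d ∈ P) (-d ∈ P)) :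
    ∀ i : Fin n, ∑ p ∈ P, sOp (p i) = (3 : ZMod 6) :=
  sum_s_over_orbit_representatives_eq_const_three_general n D hsubdir P hPV hrep
end
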